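/- arXiv:1712.00839 — 2 statements merged into one kernel-verified Lean document; each statement's English description precedes it below -/
import Mathlib

section
/- Let r ≥ 2 and n ≥ 1 be integers, let l be an integer with 0 ≤ l ≤ n, and let ε ∈ {0,1,…,r−1}^n be given by ε_i = 1 for 1 ≤ i ≤ l and ε_i = 0 for l < i ≤ n. Let ρ be the permutation of {1,…,n} with ρ(i) = l+1−i for 1 ≤ i ≤ l and ρ(i) = i for l < i ≤ n. Then for every permutation π of {1,…,n}, setting γ = (ε_{π(1)},…,ε_{π(n)}), one has Des(γ,π) ∖ {0} = Des(ρ∘π), where Des(ρ∘π) = {i ∈ {1,…,n−1} : (ρ∘π)(i) > (ρ∘π)(i+1)} is the ordinary descent set; moreover 0 ∈ Des(γ,π) if and only if π(1) ≤ l. -/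
open Finset

/-- 1-based value of `π` at position `i ∈ {1,…,n}`, with the convention `π(0) = 0`. -/
def wval {n : ℕ} (π : Equiv.Perm (Fin n)) (i : ℕ) : ℕ :=
  if h : 1 ≤ i ∧ i ≤ n then (π ⟨i - 1, by omega⟩ : ℕ) + 1 else 0

/-- Color at position `i` (1-based), with the convention `ε_0 = 0`. -/
def wcolor {n : ℕ} (ε : Fin n → ℕ) (i : ℕ) : ℕ :=
  if h : 1 ≤ i ∧ i ≤ n then ε ⟨i - 1, by omega⟩ else 0

/-- The Biagioli–Zeng order on colored letters: `(j,c) > (k,d)`. -/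
def bzGT (a b : ℕ × ℕ) : Prop :=
  (a.2 = 0 ∧ b.2 = 0 ∧ b.1 < a.1) ∨ (0 < a.2 ∧ 0 < b.2 ∧ a.1 < b.1) ∨ (a.2 = 0 ∧ 0 < b.2)

instance (a b : ℕ × ℕ) : Decidable (bzGT a b) := by unfold bzGT; exact inferInstance

/-- The descent set `Des(ε,π) ⊆ {0,…,n-1}` of a colored permutation. -/
def DesBZ {n : ℕ} (ε : Fin n → ℕ) (π : Equiv.Perm (Fin n)) : Finset ℕ :=
  (Finset.range n).filter fun i =>
    bzGT (wval π i, wcolor ε i) (wval π (i + 1), wcolor ε (i + 1))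

def desBZ {n : ℕ} (ε : Fin n → ℕ) (π : Equiv.Perm (Fin n)) : ℕ := (DesBZ ε π).card

def majBZ {n : ℕ} (ε : Fin n → ℕ) (π : Equiv.Perm (Fin n)) : ℕ := ∑ i ∈ DesBZ ε π, i

/-- The color weight `col(ε)`. -/
def colwt {n : ℕ} (ε : Fin n → ℕ) : ℕ := ∑ i, ε i

/-- Ordinary descent set `{i ∈ {1,…,n-1} : σ(i) > σ(i+1)}` (1-based). -/
def ordDes {n : ℕ} (σ : Equiv.Perm (Fin n)) : Finset ℕ :=
  (Finset.range n).filter fun i => 1 ≤ i ∧ wval σ (i + 1) < wval σ i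

noncomputable def qP : MvPolynomial (Fin 2) ℤ := MvPolynomial.X 0
noncomputable def uP : MvPolynomial (Fin 2) ℤ := MvPolynomial.X 1
noncomputable def qNat (m : ℕ) : MvPolynomial (Fin 2) ℤ := ∑ i ∈ Finset.range m, qP ^ i
noncomputable def uNat (m : ℕ) : MvPolynomial (Fin 2) ℤ := ∑ i ∈ Finset.range m, uP ^ i

/-- The monomial `m'(j,k)`. -/
noncomputable def mPrime (j k : ℕ) : MvPolynomial (Fin 2) ℤ :=
  if j ≤ k then qP ^ j else qP ^ ((j - 1) % k) * uP ^ ((j - 1) / k)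

/-- Lattice points of `cone(F_ε)` at height `k`. -/
def Lset {n : ℕ} (ε : Fin n → ℕ) (k : ℕ) : Finset (Fin n → ℕ) :=
  Fintype.piFinset fun i =>
    if 0 < ε i then Finset.Ioc (k * ε i) (k * (ε i + 1)) else Finset.Icc 0 k

/-!
Coloring exactly the letters `1, …, l` makes the Biagioli–Zeng order on the letters of `π`
coincide with the usual order of their images under `ρ`: colored letters lie below uncolored
ones and are compared in reverse, exactly as `ρ` reverses `{1, …, l}` below `{l+1, …, n}`.
At position `0` the letter `0⁰` exceeds `π(1)^{γ_1}` precisely when `π(1)` is colored.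
-/

def reverseBelow (l x : ℕ) : ℕ := if x < l then l - 1 - x else x

section

variable {n : ℕ}

theorem wval_zero (π : Equiv.Perm (Fin n)) : wval π 0 = 0 := by
  simp [wval]

theorem wval_succ (π : Equiv.Perm (Fin n)) (i : Fin n) : wval π (i + 1) = π i + 1 := by
  simp [wval, Nat.succ_le_of_lt i.isLt]

theorem wcolor_zero (ε : Fin n → ℕ) : wcolor ε 0 = 0 := by
  simp [wcolor]

theorem wcolor_succ (ε : Fin n → ℕ) (i : Fin n) : wcolor ε (i + 1) = ε i := by
  simp [wcolor, Nat.succ_le_of_lt i.isLt]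

theorem bzGT_zero_left_iff (b : ℕ × ℕ) : bzGT (0, 0) b ↔ 0 < b.2 := by
  simp [bzGT]

theorem zero_mem_DesBZ_iff (ε : Fin n → ℕ) (π : Equiv.Perm (Fin n)) (hn : 0 < n) :
    0 ∈ DesBZ ε π ↔ 0 < ε ⟨0, hn⟩ := by
  simp only [DesBZ, mem_filter, mem_range, hn, true_and, wval_zero, wcolor_zero,
    bzGT_zero_left_iff]
  exact iff_of_eq (congrArg _ (wcolor_succ ε ⟨0, hn⟩))

theorem mem_DesBZ_iff_of_succ_eq (ε : Fin n → ℕ) (π : Equiv.Perm (Fin n)) {i j : Fin n}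
    (hij : (j : ℕ) = i + 1) :
    (j : ℕ) ∈ DesBZ ε π ↔ bzGT (π i + 1, ε i) (π j + 1, ε j) := by
  simp only [DesBZ, mem_filter, mem_range, j.isLt, true_and]
  rw [hij, wval_succ, wcolor_succ, ← hij, wval_succ, wcolor_succ]

theorem mem_ordDes_iff_of_succ_eq (σ : Equiv.Perm (Fin n)) {i j : Fin n}
    (hij : (j : ℕ) = i + 1) :
    (j : ℕ) ∈ ordDes σ ↔ (σ j : ℕ) < σ i := by
  simp only [ordDes, mem_filter, mem_range, j.isLt, true_and]
  rw [hij, wval_succ, ← hij, wval_succ]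
  omega

end

theorem bzGT_colorBelow_iff (l p q : ℕ) :
    bzGT (p + 1, if p < l then 1 else 0) (q + 1, if q < l then 1 else 0) ↔
      reverseBelow l q < reverseBelow l p := by
  unfold bzGT reverseBelow
  split_ifs <;> simp <;> omega

theorem descents_via_rho (n : ℕ) (hn : 1 ≤ n)
    (l : ℕ) (ε : Fin n → ℕ)
    (hε : ∀ i : Fin n, ε i = if (i : ℕ) < l then 1 else 0)
    (ρ : Equiv.Perm (Fin n))
    (hρ : ∀ i : Fin n, (ρ i : ℕ) = if (i : ℕ) < l then l - 1 - (i : ℕ) else (i : ℕ))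
    (π : Equiv.Perm (Fin n)) :
    DesBZ (fun i => ε (π i)) π \ {0} = ordDes (ρ * π) ∧
      (0 ∈ DesBZ (fun i => ε (π i)) π ↔ (π ⟨0, by omega⟩ : ℕ) < l) := by
  have hρ' : ∀ i, (ρ i : ℕ) = reverseBelow l i := hρ
  refine ⟨?_, ?_⟩
  · ext k
    rcases k with _ | m
    · simp [ordDes]
    by_cases hm : m + 1 < n
    · let i : Fin n := ⟨m, by omega⟩
      let j : Fin n := ⟨m + 1, hm⟩
      have hij : (j : ℕ) = i + 1 := rfl
      rw [mem_sdiff, mem_DesBZ_iff_of_succ_eq _ _ hij, mem_ordDes_iff_of_succ_eq _ hij, hε, hε,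
        bzGT_colorBelow_iff, Equiv.Perm.mul_apply, Equiv.Perm.mul_apply, hρ', hρ']
      simp
    · simp [DesBZ, ordDes, hm]
  · rw [zero_mem_DesBZ_iff _ _ (by omega), hε]
    exact Nat.pos_iff_ne_zero.trans ite_ne_right_iff |>.trans (and_iff_left one_ne_zero)
end

section
/- Let r and n be positive integers. Then for every ε ∈ {0,1,…,r−1}^n, the following identity holds in the ring of formal power series in t with coefficients in ℤ[q,u]: (∑_{k ≥ 0} (∑_{v ∈ L_ε(k)} ∏_{i=1}^n m'(v_i, k)) t^k) · ∏_{j=0}^{n} (1 − q^j t) = ∑_{(γ,π) ∈ G_ε} q^{maj(γ,π)} t^{des(γ,π)} u^{col(ε)}. -/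
open Finset

/-!
Subtracting `k ε_i + 1` from the coloured coordinates turns the weighted lattice points of
`L_ε(k)` into `u^{col ε}` times the `q`-weighted points `f` of the box `f_i ≤ k`, with `f_i < k`
on coloured coordinates. Sorting such an `f` decreasingly, ties broken by the Biagioli–Zeng order
of the letters, splits the box according to a permutation `π`: the sorted values are exactly the
sequences `k ≥ l_1 ≥ ⋯ ≥ l_n ≥ 0` that decrease strictly at the descents of `(ε ∘ π, π)`, the
letter `0` in front of the word accounting for the strict bound on coloured coordinates. The
generating function of these sequences is `q^maj t^des / ∏_{j=0}^n (1 - q^j t)`: peeling off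
`l_1` multiplies the generating function of the remaining sequence, evaluated at `q t`, by
`t^[0 is a descent] / (1 - t)`.
-/

open PowerSeries Function OrderDual

lemma Fin.strictMono_cons_iff {β : Type*} [Preorder β] {n : ℕ} {a : β} {f : Fin (n + 1) → β} :
    StrictMono (Fin.cons a f : Fin (n + 2) → β) ↔ a < f 0 ∧ StrictMono f :=
  strictMono_vecCons

lemma Fin.strictMono_cons_iff_forall {β : Type*} [Preorder β] {n : ℕ} {a : β} {f : Fin n → β} :
    StrictMono (Fin.cons a f : Fin (n + 1) → β) ↔ (∀ i, a < f i) ∧ StrictMono f := by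
  refine ⟨fun h => ⟨fun i => h (Fin.succ_pos i), fun i j hij => h (Fin.succ_lt_succ_iff.2 hij)⟩,
    fun ⟨ha, hf⟩ i j hij => ?_⟩
  induction j using Fin.cases with
  | zero => exact absurd hij (Fin.not_lt_zero i)
  | succ j =>
    induction i using Fin.cases with
    | zero => exact ha j
    | succ i => exact hf (Fin.succ_lt_succ_iff.1 hij)

lemma Tuple.sort_eq_of_strictMono_comp {β : Type*} [LinearOrder β] {n : ℕ} {g : Fin n → β}
    {σ : Equiv.Perm (Fin n)} (h : StrictMono (g ∘ σ)) : Tuple.sort g = σ :=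
  (Tuple.eq_sort_iff.2 ⟨h.monotone, fun _ _ hij heq => absurd heq (h hij).ne⟩).symm

lemma Tuple.strictMono_comp_sort {β : Type*} [LinearOrder β] {n : ℕ} {g : Fin n → β}
    (hg : Injective g) : StrictMono (g ∘ Tuple.sort g) :=
  (Tuple.monotone_sort g).strictMono_of_injective (hg.comp (Tuple.sort g).injective)

section PowerSeries

variable {R : Type*} [CommRing R] (q : R)

lemma PowerSeries.rescale_C (a : R) : rescale q (C a) = C a := by
  ext k
  rw [coeff_rescale, coeff_C]
  split_ifs with hk <;> simp [hk]

lemma PowerSeries.rescale_one_sub_C_mul_X (j : ℕ) :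
    rescale q (1 - C (q ^ j) * X) = 1 - C (q ^ (j + 1)) * X := by
  rw [map_sub, map_one, map_mul, rescale_C, rescale_X, pow_succ, map_mul, mul_assoc]

lemma PowerSeries.coeff_X_pow_mul_mk_one_mul (a : ℕ → R) (d k : ℕ) :
    coeff k (X ^ d * (PowerSeries.mk 1 * PowerSeries.mk a)) =
      ∑ m ∈ range (k + 1 - d), a m := by
  rw [coeff_X_pow_mul', mul_comm, coeff_mul, Finset.Nat.sum_antidiagonal_eq_sum_range_succ_mk]
  split_ifs with h
  · simp [Nat.sub_add_comm h]
  · simp [show k + 1 - d = 0 by omega]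

end PowerSeries

namespace PPartition

variable {α : Type*} {n : ℕ}

def lexKey (L : Fin n → ℕ) (w : Fin n → α) (i : Fin n) : ℕᵒᵈ ×ₗ α :=
  toLex (toDual (L i), w i)

lemma lexKey_cons (a : ℕ) (L : Fin n → ℕ) (x : α) (w : Fin n → α) :
    lexKey (Fin.cons a L) (Fin.cons x w) = Fin.cons (toLex (toDual a, x)) (lexKey L w) := by
  ext i
  cases i using Fin.cases <;> rfl

lemma lexKey_injective {κ : Fin n → α} (hκ : Injective κ) (f : Fin n → ℕ) :
    Injective (lexKey f κ) :=
  fun _ _ h => hκ (congrArg (fun x => (ofLex x).2) h)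

variable [LinearOrder α]

lemma toLex_toDual_lt_iff {a b : ℕ} {x y : α} (hxy : x ≠ y) :
    toLex (toDual a, x) < toLex (toDual b, y) ↔ b ≤ a ∧ (y < x → b < a) := by
  rw [Prod.Lex.toLex_lt_toLex']
  simp only [toDual_le_toDual, toDual_inj]
  refine and_congr_right fun hba =>
    ⟨fun h hyx => lt_of_le_of_ne hba fun hab => ?_, fun h hab => ?_⟩
  · exact (h hab.symm).asymm hyx
  · exact (lt_or_gt_of_ne hxy).resolve_right fun hyx => (h hyx).ne hab.symm

open scoped Classical in
/-- For injective `w`, `l ∈ compatibleSet w k` says `k ≥ l 0 ≥ l 1 ≥ ⋯`, the inequality being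
strict at every descent `w i.succ < w i.castSucc` of `w` (position `0` of `w` faces `k`). -/
def compatibleSet (w : Fin (n + 1) → α) (k : ℕ) : Finset (Fin n → ℕ) :=
  {l ∈ Fintype.piFinset fun _ => range (k + 1) | StrictMono (lexKey (Fin.cons k l) w)}

lemma mem_compatibleSet {w : Fin (n + 1) → α} {k : ℕ} {l : Fin n → ℕ} :
    l ∈ compatibleSet w k ↔ StrictMono (lexKey (Fin.cons k l) w) := by
  refine ⟨fun h => (mem_filter.1 h).2, fun h => mem_filter.2 ⟨?_, h⟩⟩
  refine Fintype.mem_piFinset.2 fun i => mem_range_succ_iff.2 ?_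
  simpa using (Prod.Lex.toLex_lt_toLex'.1 (h (Fin.succ_pos i))).1

lemma cons_mem_compatibleSet_iff {w : Fin (n + 2) → α} (hw : w 0 ≠ w 1) {k m : ℕ}
    {l : Fin n → ℕ} :
    Fin.cons m l ∈ compatibleSet w k ↔
      m < k + 1 - (if w 1 < w 0 then 1 else 0) ∧ l ∈ compatibleSet (Fin.tail w) m := by
  rw [mem_compatibleSet, mem_compatibleSet]
  conv_lhs => rw [← Fin.cons_self_tail w, lexKey_cons, Fin.strictMono_cons_iff]
  rw [lexKey, Fin.cons_zero, Fin.tail, Fin.succ_zero_eq_one, toLex_toDual_lt_iff hw]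
  split_ifs <;> grind

def descents (w : Fin (n + 1) → α) : Finset (Fin n) := {i | w i.succ < w i.castSucc}

lemma card_descents_succ (w : Fin (n + 2) → α) :
    #(descents w) = (if w 1 < w 0 then 1 else 0) + #(descents (Fin.tail w)) := by
  rw [descents, descents, card_filter, card_filter, Fin.sum_univ_succ]
  rfl

lemma sum_descents_succ (w : Fin (n + 2) → α) :
    ∑ i ∈ descents w, (i : ℕ) =
      ∑ i ∈ descents (Fin.tail w), (i : ℕ) + #(descents (Fin.tail w)) := by
  rw [descents, descents, sum_filter, sum_filter, card_filter, Fin.sum_univ_succ,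
    ← sum_add_distrib]
  simp only [Fin.val_zero, ite_self, zero_add, Fin.val_succ, Fin.tail]
  refine sum_congr rfl fun i _ => ?_
  by_cases h : w i.succ.succ < w i.castSucc.succ <;> simp [h]

variable {R : Type*} [CommRing R] (q : R)

def compatibleSum (w : Fin (n + 1) → α) (k : ℕ) : R :=
  ∑ l ∈ compatibleSet w k, q ^ ∑ i, l i

lemma compatibleSum_of_length_zero (w : Fin 1 → α) (k : ℕ) : compatibleSum q w k = 1 := by
  have : compatibleSet w k = univ :=
    eq_univ_of_forall fun _ =>
      mem_compatibleSet.2 (Fin.strictMono_iff_lt_succ.2 fun i => i.elim0)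
  simp [compatibleSum, this]

lemma compatibleSum_succ {w : Fin (n + 2) → α} (hw : w 0 ≠ w 1) (k : ℕ) :
    compatibleSum q w k = ∑ m ∈ range (k + 1 - if w 1 < w 0 then 1 else 0),
      q ^ m * compatibleSum q (Fin.tail w) m := by
  simp only [compatibleSum, mul_sum, ← pow_add]
  rw [sum_sigma']
  refine sum_nbij' (fun l => ⟨l 0, Fin.tail l⟩) (fun x => Fin.cons x.1 x.2) ?_ ?_ ?_ ?_ ?_
  · intro l hl
    rw [← Fin.cons_self_tail l, cons_mem_compatibleSet_iff hw] at hl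
    simpa using hl
  · rintro ⟨m, l⟩ h
    simpa [cons_mem_compatibleSet_iff hw] using h
  · intro l _
    exact Fin.cons_self_tail l
  · rintro ⟨m, l⟩ _
    simp
  · intro l _
    simp [Fin.sum_univ_succ, Fin.tail]

lemma mk_compatibleSum_succ {w : Fin (n + 2) → α} (hw : w 0 ≠ w 1) :
    PowerSeries.mk (compatibleSum q w) = X ^ (if w 1 < w 0 then 1 else 0) *
      (PowerSeries.mk 1 * rescale q (PowerSeries.mk (compatibleSum q (Fin.tail w)))) := by
  ext k
  rw [rescale_mk, coeff_X_pow_mul_mk_one_mul, coeff_mk, compatibleSum_succ q hw]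

theorem mk_compatibleSum_mul_prod (w : Fin (n + 1) → α) (hw : Injective w) :
    PowerSeries.mk (compatibleSum q w) * ∏ j ∈ range (n + 1), (1 - C (q ^ j) * X) =
      C (q ^ ∑ i ∈ descents w, (i : ℕ)) * X ^ #(descents w) := by
  induction n with
  | zero =>
    have h1 : compatibleSum q w = 1 := funext (compatibleSum_of_length_zero q w)
    simp [h1, descents, mk_one_mul_one_sub_eq_one]
  | succ n ih =>
    set F := PowerSeries.mk (compatibleSum q (Fin.tail w))
    rw [mk_compatibleSum_succ q (hw.ne Fin.zero_ne_one), prod_range_succ', sum_descents_succ,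
      card_descents_succ]
    calc X ^ (if w 1 < w 0 then 1 else 0) * (PowerSeries.mk 1 * rescale q F) *
          ((∏ j ∈ range (n + 1), (1 - C (q ^ (j + 1)) * X)) * (1 - C (q ^ 0) * X))
        = X ^ (if w 1 < w 0 then 1 else 0) * (PowerSeries.mk 1 * (1 - X)) *
            rescale q (F * ∏ j ∈ range (n + 1), (1 - C (q ^ j) * X)) := by
          simp only [map_mul, map_prod, rescale_one_sub_C_mul_X, pow_zero, map_one, one_mul]
          ring
      _ = _ := by
          rw [mk_one_mul_one_sub_eq_one, ih (Fin.tail w) (hw.comp (Fin.succ_injective _))]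
          simp only [map_mul, map_pow, rescale_C, rescale_X, pow_add, mul_pow]
          ring

def box (κ : Fin n → α) (z : α) (k : ℕ) : Finset (Fin n → ℕ) :=
  Fintype.piFinset fun a => if κ a < z then range k else range (k + 1)

lemma mem_box_iff {κ : Fin n → α} {z : α} (hz : ∀ a, κ a ≠ z) {k : ℕ} {f : Fin n → ℕ} :
    f ∈ box κ z k ↔ ∀ a, toLex (toDual k, z) < lexKey f κ a := by
  refine Fintype.mem_piFinset.trans (forall_congr' fun a => ?_)
  rw [lexKey, toLex_toDual_lt_iff (hz a).symm]
  split_ifs with h <;> simp [h]; omega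

theorem sum_box_eq_sum_compatibleSum {κ : Fin n → α} (hκ : Injective κ) {z : α}
    (hz : ∀ a, κ a ≠ z) (k : ℕ) :
    ∑ f ∈ box κ z k, q ^ ∑ a, f a =
      ∑ σ : Equiv.Perm (Fin n), compatibleSum q (Fin.cons z (κ ∘ σ)) k := by
  have mem_iff : ∀ (σ : Equiv.Perm (Fin n)) (l : Fin n → ℕ),
      l ∈ compatibleSet (Fin.cons z (κ ∘ σ)) k ↔
        (∀ i, toLex (toDual k, z) < lexKey l (κ ∘ σ) i) ∧ StrictMono (lexKey l (κ ∘ σ)) :=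
    fun σ l => by rw [mem_compatibleSet, lexKey_cons, Fin.strictMono_cons_iff_forall]
  simp only [compatibleSum]
  rw [sum_sigma']
  refine sum_nbij' (fun f => ⟨Tuple.sort (lexKey f κ), f ∘ Tuple.sort (lexKey f κ)⟩)
    (fun x => x.2 ∘ x.1.symm) ?_ ?_ ?_ ?_ ?_
  · intro f hf
    refine mem_sigma.2 ⟨mem_univ _, (mem_iff _ _).2 ⟨fun i => (mem_box_iff hz).1 hf _, ?_⟩⟩
    exact Tuple.strictMono_comp_sort (lexKey_injective hκ f)
  · rintro ⟨σ, l⟩ hl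
    have h := (mem_iff σ l).1 (mem_sigma.1 hl).2
    exact (mem_box_iff hz).2 fun a => by simpa [lexKey] using h.1 (σ.symm a)
  · intro f _
    ext a
    simp
  · rintro ⟨σ, l⟩ hl
    have h := (mem_iff σ l).1 (mem_sigma.1 hl).2
    have hcomp : lexKey (l ∘ σ.symm) κ ∘ σ = lexKey l (κ ∘ σ) := by
      funext i
      simp [lexKey]
    rw [Tuple.sort_eq_of_strictMono_comp (hcomp ▸ h.2)]
    congr 1
    funext i
    simp
  · intro f _
    exact congrArg (q ^ ·) (Equiv.sum_comp _ f).symm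

end PPartition

namespace BiagioliZeng

open PPartition

def letterKey (x : ℕ × ℕ) : ℤ := if x.2 = 0 then x.1 else -x.1

lemma bzGT_iff_letterKey_lt {a b : ℕ × ℕ} (hb : b.1 = 0 → b.2 = 0) :
    bzGT a b ↔ letterKey b < letterKey a := by
  obtain ⟨j, c⟩ := a
  obtain ⟨k, d⟩ := b
  simp only [bzGT, letterKey] at *
  split_ifs <;> omega

variable {n : ℕ} (ε : Fin n → ℕ)

def colorKey (a : Fin n) : ℤ := letterKey ((a : ℕ) + 1, ε a)

lemma colorKey_injective : Injective (colorKey ε) := by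
  intro a b h
  simp only [colorKey, letterKey] at h
  ext
  split_ifs at h <;> omega

lemma colorKey_ne_zero (a : Fin n) : colorKey ε a ≠ 0 := by
  simp only [colorKey, letterKey]
  split_ifs <;> omega

lemma colorKey_neg_iff (a : Fin n) : colorKey ε a < 0 ↔ 0 < ε a := by
  simp only [colorKey, letterKey]
  split_ifs <;> omega

def coloredWord (π : Equiv.Perm (Fin n)) : Fin (n + 1) → ℤ := Fin.cons 0 (colorKey ε ∘ π)

lemma coloredWord_injective (π : Equiv.Perm (Fin n)) : Injective (coloredWord ε π) := by
  refine Fin.cons_injective_iff.2 ⟨?_, (colorKey_injective ε).comp π.injective⟩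
  rintro ⟨a, ha⟩
  exact colorKey_ne_zero ε _ ha

lemma letterKey_letter (π : Equiv.Perm (Fin n)) (i : Fin (n + 1)) :
    letterKey (wval π i, wcolor (fun a => ε (π a)) i) = coloredWord ε π i := by
  induction i using Fin.cases with
  | zero => simp [wval, wcolor, letterKey, coloredWord]
  | succ a => simp [wval, wcolor, coloredWord, colorKey]

lemma mem_DesBZ_iff (π : Equiv.Perm (Fin n)) (a : Fin n) :
    (a : ℕ) ∈ DesBZ (fun a => ε (π a)) π ↔
      coloredWord ε π a.succ < coloredWord ε π a.castSucc := by
  rw [← letterKey_letter, ← letterKey_letter, ← bzGT_iff_letterKey_lt, DesBZ, mem_filter]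
  · simp
  · simp [wval]

lemma DesBZ_eq_map_descents (π : Equiv.Perm (Fin n)) :
    DesBZ (fun a => ε (π a)) π = (descents (coloredWord ε π)).map Fin.valEmbedding := by
  ext i
  simp only [mem_map, descents, mem_filter, mem_univ, true_and, Fin.valEmbedding_apply]
  constructor
  · intro hi
    have hin : i < n := mem_range.1 (mem_filter.1 hi).1
    exact ⟨⟨i, hin⟩, (mem_DesBZ_iff ε π ⟨i, hin⟩).1 hi, rfl⟩
  · rintro ⟨a, ha, rfl⟩
    exact (mem_DesBZ_iff ε π a).2 ha

lemma desBZ_eq_card_descents (π : Equiv.Perm (Fin n)) :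
    desBZ (fun a => ε (π a)) π = #(descents (coloredWord ε π)) := by
  rw [desBZ, DesBZ_eq_map_descents, card_map]

lemma majBZ_eq_sum_descents (π : Equiv.Perm (Fin n)) :
    majBZ (fun a => ε (π a)) π = ∑ i ∈ descents (coloredWord ε π), (i : ℕ) := by
  rw [majBZ, DesBZ_eq_map_descents, sum_map]
  rfl

end BiagioliZeng

open BiagioliZeng PPartition

lemma mPrime_of_le {j k : ℕ} (h : j ≤ k) : mPrime j k = qP ^ j := if_pos h

lemma mPrime_colored {c f k : ℕ} (hc : 0 < c) (hf : f < k) :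
    mPrime (k * c + 1 + f) k = qP ^ f * uP ^ c := by
  have hk : 0 < k := by omega
  rw [mPrime, if_neg (by nlinarith), show k * c + 1 + f - 1 = f + c * k by ring_nf; omega,
    Nat.add_mul_mod_self_right, Nat.mod_eq_of_lt hf, Nat.add_mul_div_right f c hk,
    Nat.div_eq_of_lt hf, zero_add]

lemma sum_mPrime_Ioc {c : ℕ} (hc : 0 < c) (k : ℕ) :
    ∑ x ∈ Ioc (k * c) (k * (c + 1)), mPrime x k = uP ^ c * ∑ x ∈ range k, qP ^ x := by
  rw [← Ico_add_one_add_one_eq_Ioc, sum_Ico_eq_sum_range, mul_sum,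
    show k * (c + 1) + 1 - (k * c + 1) = k by rw [mul_add_one]; omega]
  exact sum_congr rfl fun f hf => by rw [mPrime_colored hc (mem_range.1 hf), mul_comm]

lemma sum_mPrime_Icc (k : ℕ) : ∑ x ∈ Icc 0 k, mPrime x k = ∑ x ∈ range (k + 1), qP ^ x := by
  rw [range_eq_Ico, Ico_add_one_right_eq_Icc]
  exact sum_congr rfl fun x hx => mPrime_of_le (mem_Icc.1 hx).2

lemma sum_Lset_prod_mPrime {n : ℕ} (ε : Fin n → ℕ) (k : ℕ) :
    ∑ v ∈ Lset ε k, ∏ i, mPrime (v i) k =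
      uP ^ colwt ε * ∑ f ∈ PPartition.box (colorKey ε) 0 k, qP ^ ∑ a, f a := by
  simp_rw [← prod_pow_eq_pow_sum]
  rw [Lset, PPartition.box, colwt, ← prod_pow_eq_pow_sum,
    ← prod_univ_sum _ fun _ x => mPrime x k, ← prod_univ_sum _ fun _ x => qP ^ x,
    ← prod_mul_distrib]
  simp_rw [colorKey_neg_iff]
  refine prod_congr rfl fun a _ => ?_
  split_ifs with h
  · exact sum_mPrime_Ioc h k
  · rw [Nat.eq_zero_of_not_pos h, pow_zero, one_mul]
    exact sum_mPrime_Icc k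

theorem cone_generating_function_general (n : ℕ) (ε : Fin n → ℕ) :
    (PowerSeries.mk fun k => ∑ v ∈ Lset ε k, ∏ i, mPrime (v i) k) *
        ∏ j ∈ Finset.range (n + 1),
          (1 - PowerSeries.C (R := MvPolynomial (Fin 2) ℤ) (qP ^ j) * PowerSeries.X) =
      ∑ π : Equiv.Perm (Fin n),
        PowerSeries.C (R := MvPolynomial (Fin 2) ℤ)
            (qP ^ majBZ (fun i => ε (π i)) π * uP ^ colwt ε) *
          PowerSeries.X ^ desBZ (fun i => ε (π i)) π := by
  have hseries : (PowerSeries.mk fun k => ∑ v ∈ Lset ε k, ∏ i, mPrime (v i) k) =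
      C (uP ^ colwt ε) *
        ∑ π : Equiv.Perm (Fin n), PowerSeries.mk (compatibleSum qP (coloredWord ε π)) := by
    ext k : 1
    rw [coeff_mk, sum_Lset_prod_mPrime, sum_box_eq_sum_compatibleSum qP (colorKey_injective ε)
      (colorKey_ne_zero ε), coeff_C_mul, map_sum]
    simp only [coeff_mk, coloredWord]
  rw [hseries, mul_assoc, sum_mul,
    sum_congr rfl fun π _ => mk_compatibleSum_mul_prod qP _ (coloredWord_injective ε π), mul_sum]
  refine sum_congr rfl fun π _ => ?_
  rw [desBZ_eq_card_descents, majBZ_eq_sum_descents, map_mul]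
  ring

theorem cone_generating_function (r n : ℕ) (hr : 0 < r) (hn : 0 < n)
    (ε : Fin n → ℕ) (hε : ∀ i, ε i < r) :
    (PowerSeries.mk fun k => ∑ v ∈ Lset ε k, ∏ i, mPrime (v i) k) *
        ∏ j ∈ Finset.range (n + 1),
          (1 - PowerSeries.C (R := MvPolynomial (Fin 2) ℤ) (qP ^ j) * PowerSeries.X) =
      ∑ π : Equiv.Perm (Fin n),
        PowerSeries.C (R := MvPolynomial (Fin 2) ℤ)
            (qP ^ majBZ (fun i => ε (π i)) π * uP ^ colwt ε) *
          PowerSeries.X ^ desBZ (fun i => ε (π i)) π :=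
  cone_generating_function_general n ε
end
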